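/- For every integer k ≥ 2 there exist integers x₁, x₂, x₃, x₄, x₅ such that k = 2x₁² + 2x₂² + 2x₃² + 2x₄² + 3x₅² and moreover either x₁ = 1 or x₅ = 1. -/

import Mathlib

/-!
For even `k` take `x₁ = 1` and `x₅ = 2u`: what is needed is that `x² + y² + z² + 6u²` represents
every natural number, which follows from Legendre's theorem that every `n ≡ 1, 2 (mod 4)` is a
sum of three squares (subtract `6` when `n ≡ 0, 3 (mod 4)`). For odd `k` take `x₅ = 1` and apply
Lagrange's four-square theorem.

For the three-square theorem, Dirichlet's theorem gives a prime `p ≡ 2n - 1 (mod 4n)`. Then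
`n ∣ p + 1`, and `-n` is a square modulo `p` because `J(-n | p) = J(-n | 2n - 1) = J(-2 | 2n - 1)`.
These two facts produce a positive definite integral ternary form of determinant `1` with `n` as
a diagonal coefficient. Hermite's reduction (Lagrange–Gauss reduction of the binary form of
`2 × 2` minors through a corner) shows that such a form takes only sums of three squares as values.
-/

open Matrix

namespace Matrix

section Conjugation

variable {n R : Type*} [Fintype n]

theorem transpose_mul_mul_apply [CommSemiring R] (A U : Matrix n n R) (i j : n) :
    (Uᵀ * A * U) i j = Uᵀ i ⬝ᵥ A *ᵥ Uᵀ j := by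
  rw [Matrix.mul_assoc, mul_apply']
  rfl

theorem dotProduct_mulVec_transpose_mul_mul [CommSemiring R] (A U : Matrix n n R) (v : n → R) :
    v ⬝ᵥ (Uᵀ * A * U) *ᵥ v = (U *ᵥ v) ⬝ᵥ A *ᵥ (U *ᵥ v) := by
  rw [← mulVec_mulVec, ← mulVec_mulVec, dotProduct_mulVec, vecMul_transpose]

variable [DecidableEq n] [CommRing R]

theorem exists_dotProduct_mulVec_transpose_mul_mul_eq (A : Matrix n n R) {U : Matrix n n R}
    (hU : U.det = 1) (v : n → R) : ∃ w : n → R, w ⬝ᵥ (Uᵀ * A * U) *ᵥ w = v ⬝ᵥ A *ᵥ v :=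
  ⟨U.adjugate *ᵥ v, by
    rw [dotProduct_mulVec_transpose_mul_mul, mulVec_mulVec, mul_adjugate, hU, one_smul,
      one_mulVec]⟩

theorem det_transpose_mul_mul_of_det_eq_one (A : Matrix n n R) {U : Matrix n n R}
    (hU : U.det = 1) : (Uᵀ * A * U).det = A.det := by
  simp [det_mul, hU]

theorem exists_eq_dotProduct_self_of_transpose_mul_mul_eq_one {A U : Matrix n n R}
    (hU : U.det = 1) (h : Uᵀ * A * U = 1) (v : n → R) : ∃ w : n → R, v ⬝ᵥ A *ᵥ v = w ⬝ᵥ w := by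
  obtain ⟨w, hw⟩ := exists_dotProduct_mulVec_transpose_mul_mul_eq A hU v
  exact ⟨w, by rw [← hw, h, one_mulVec]⟩

end Conjugation

section TrivialStar

variable {n R : Type*} [CommRing R] [PartialOrder R] [StarRing R] [TrivialStar R]

theorem PosDef.isSymm {A : Matrix n n R} (hA : A.PosDef) : A.IsSymm := by
  simpa [IsSymm, IsHermitian, conjTranspose_eq_transpose_of_trivial] using hA.isHermitian

variable [Fintype n]

theorem PosDef.dotProduct_mulVec_pos' {A : Matrix n n R} (hA : A.PosDef) {v : n → R}
    (hv : v ≠ 0) : 0 < v ⬝ᵥ A *ᵥ v := by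
  simpa using hA.dotProduct_mulVec_pos hv

theorem PosDef.of_isSymm {A : Matrix n n R} (hA : A.IsSymm)
    (hpos : ∀ v : n → R, v ≠ 0 → 0 < v ⬝ᵥ A *ᵥ v) : A.PosDef :=
  .of_dotProduct_mulVec_pos (by rw [IsHermitian, conjTranspose_eq_transpose_of_trivial]; exact hA)
    fun v hv => by simpa using hpos v hv

theorem PosDef.transpose_mul_mul_of_det_eq_one [DecidableEq n] {A U : Matrix n n R}
    (hA : A.PosDef) (hU : U.det = 1) : (Uᵀ * A * U).PosDef := by
  simpa [conjTranspose_eq_transpose_of_trivial] using hA.conjTranspose_mul_mul_same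
    (mulVec_injective_of_isUnit ((isUnit_iff_isUnit_det U).2 (hU ▸ isUnit_one)))

end TrivialStar

end Matrix

theorem Int.exists_abs_two_mul_add_mul_le (b : ℤ) {a : ℤ} (ha : 0 < a) :
    ∃ k : ℤ, |2 * (b + k * a)| ≤ a := by
  refine ⟨-((2 * b + a) / (2 * a)), abs_le.2 ⟨?_, ?_⟩⟩ <;>
    linarith [Int.emod_add_mul_ediv (2 * b + a) (2 * a),
      Int.emod_nonneg (2 * b + a) (by omega : 2 * a ≠ 0),
      Int.emod_lt_of_pos (2 * b + a) (by omega : 0 < 2 * a)]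

namespace Matrix

def IsGaussReduced (A : Matrix (Fin 2) (Fin 2) ℤ) : Prop :=
  |2 * A 0 1| ≤ A 0 0 ∧ A 0 0 ≤ A 1 1

theorem exists_isGaussReduced (A : Matrix (Fin 2) (Fin 2) ℤ) (hA : A.PosDef) :
    ∃ U : Matrix (Fin 2) (Fin 2) ℤ, U.det = 1 ∧ IsGaussReduced (Uᵀ * A * U) := by
  induction hN : (A 0 0).toNat using Nat.strong_induction_on generalizing A with
  | _ N ih =>
  have ha : 0 < A 0 0 := hA.diag_pos
  obtain ⟨k, hk⟩ := Int.exists_abs_two_mul_add_mul_le (A 0 1) ha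
  set T : Matrix (Fin 2) (Fin 2) ℤ := !![1, k; 0, 1]
  have hT : T.det = 1 := by simp [T, det_fin_two_of]
  have hT00 : (Tᵀ * A * T) 0 0 = A 0 0 := by
    simp [transpose_mul_mul_apply, T, dotProduct, mulVec, Fin.sum_univ_two]
  have hT01 : (Tᵀ * A * T) 0 1 = A 0 1 + k * A 0 0 := by
    simp [transpose_mul_mul_apply, T, dotProduct, mulVec, Fin.sum_univ_two]
    ring
  by_cases hle : (Tᵀ * A * T) 0 0 ≤ (Tᵀ * A * T) 1 1
  · exact ⟨T, hT, by rwa [hT00, hT01], hle⟩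
  set S : Matrix (Fin 2) (Fin 2) ℤ := !![k, -1; 1, 0]
  have hS : S.det = 1 := by simp [S, det_fin_two_of]
  have hST : (Sᵀ * A * S) 0 0 = (Tᵀ * A * T) 1 1 := by
    simp [transpose_mul_mul_apply, T, S, dotProduct, mulVec, Fin.sum_univ_two]
  obtain ⟨V, hV, hred⟩ := ih _ (by omega) _ (hA.transpose_mul_mul_of_det_eq_one hS) rfl
  refine ⟨S * V, by rw [det_mul, hS, hV, one_mul], ?_⟩
  simpa only [transpose_mul, Matrix.mul_assoc] using hred

theorem IsGaussReduced.three_mul_sq_le {A : Matrix (Fin 2) (Fin 2) ℤ} (hred : IsGaussReduced A)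
    (hA : A.IsSymm) : 3 * A 0 0 ^ 2 ≤ 4 * A.det := by
  obtain ⟨h₁, h₂⟩ := abs_le.1 hred.1
  rw [det_fin_two, hA.apply 0 1]
  nlinarith [mul_nonneg (by linarith : 0 ≤ A 0 0 + 2 * A 0 1) (by linarith : 0 ≤ A 0 0 - 2 * A 0 1),
    mul_le_mul_of_nonneg_left hred.2 (by linarith : 0 ≤ A 0 0)]

theorem exists_isCoprime_three_mul_sq_le {A : Matrix (Fin 2) (Fin 2) ℤ} (hA : A.PosDef) :
    ∃ v : Fin 2 → ℤ, IsCoprime (v 0) (v 1) ∧ 3 * (v ⬝ᵥ A *ᵥ v) ^ 2 ≤ 4 * A.det := by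
  obtain ⟨U, hU, hred⟩ := exists_isGaussReduced A hA
  refine ⟨Uᵀ 0, ⟨U 1 1, -U 0 1, ?_⟩, ?_⟩
  · rw [det_fin_two] at hU
    simp only [transpose_apply]
    linear_combination hU
  · have := hred.three_mul_sq_le (hA.transpose_mul_mul_of_det_eq_one hU).isSymm
    rwa [transpose_mul_mul_apply, det_transpose_mul_mul_of_det_eq_one A hU] at this

theorem exists_transpose_mul_mul_eq_one {A : Matrix (Fin 2) (Fin 2) ℤ} (hA : A.PosDef)
    (hdet : A.det = 1) : ∃ U : Matrix (Fin 2) (Fin 2) ℤ, U.det = 1 ∧ Uᵀ * A * U = 1 := by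
  obtain ⟨U, hU, hred⟩ := exists_isGaussReduced A hA
  refine ⟨U, hU, ?_⟩
  set B := Uᵀ * A * U
  have hB : B.PosDef := hA.transpose_mul_mul_of_det_eq_one hU
  have hBdet : B.det = 1 := by rw [det_transpose_mul_mul_of_det_eq_one A hU, hdet]
  have hpos : 0 < B 0 0 := hB.diag_pos
  have hsq := hred.three_mul_sq_le hB.isSymm
  have h00 : B 0 0 = 1 := by nlinarith
  have h01 : B 0 1 = 0 := by have := abs_le.1 hred.1; omega
  have h10 : B 1 0 = 0 := (hB.isSymm.apply 0 1).trans h01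
  have h11 : B 1 1 = 1 := by rw [det_fin_two, h00, h01] at hBdet; linarith
  ext i j
  fin_cases i <;> fin_cases j <;> simp [h00, h01, h10, h11]

/-- Chiò's condensation of `A` at the pivot `(0, 0)`: the matrix of the `2 × 2` minors of `A`
containing the corner entry. -/
def chio {m : ℕ} (A : Matrix (Fin (m + 1)) (Fin (m + 1)) ℤ) : Matrix (Fin m) (Fin m) ℤ :=
  of fun i j : Fin m => A 0 0 * A i.succ j.succ - A i.succ 0 * A 0 j.succ

theorem mul_dotProduct_mulVec_eq_sq_add_chio {m : ℕ} {A : Matrix (Fin (m + 1)) (Fin (m + 1)) ℤ}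
    (hA : A.IsSymm) (v : Fin (m + 1) → ℤ) :
    A 0 0 * (v ⬝ᵥ A *ᵥ v) = (A 0 ⬝ᵥ v) ^ 2 + Fin.tail v ⬝ᵥ chio A *ᵥ Fin.tail v := by
  have hsymm (i : Fin m) : A i.succ 0 = A 0 i.succ := hA.apply 0 i.succ
  simp only [dotProduct, mulVec, chio, of_apply, Fin.sum_univ_succ, Fin.tail, hsymm, sub_mul,
    Finset.sum_sub_distrib, mul_sub, mul_add, Finset.sum_add_distrib, Finset.mul_sum]
  set S := ∑ i : Fin m, A 0 i.succ * v i.succ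
  have hS (c : ℤ) : ∑ i : Fin m, c * (v i.succ * (A 0 i.succ * v 0)) = c * v 0 * S := by
    rw [Finset.mul_sum]
    exact Finset.sum_congr rfl fun _ _ => by ring
  have hS' (c : ℤ) : ∑ i : Fin m, c * (v 0 * (A 0 i.succ * v i.succ)) = c * v 0 * S := by
    rw [Finset.mul_sum]
    exact Finset.sum_congr rfl fun _ _ => by ring
  have hSS : ∑ i : Fin m, ∑ j : Fin m, v i.succ * (A 0 i.succ * A 0 j.succ * v j.succ) = S ^ 2 := by
    rw [sq, Finset.sum_mul_sum]
    exact Finset.sum_congr rfl fun _ _ => Finset.sum_congr rfl fun _ _ => by ring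
  have hM : ∑ i : Fin m, ∑ j : Fin m, A 0 0 * (v i.succ * (A i.succ j.succ * v j.succ)) =
      ∑ i : Fin m, ∑ j : Fin m, v i.succ * (A 0 0 * A i.succ j.succ * v j.succ) :=
    Finset.sum_congr rfl fun _ _ => Finset.sum_congr rfl fun _ _ => by ring
  rw [hS, hS', hSS, hM]
  ring

theorem PosDef.chio {m : ℕ} {A : Matrix (Fin (m + 1)) (Fin (m + 1)) ℤ} (hA : A.PosDef) :
    A.chio.PosDef := by
  have ha : 0 < A 0 0 := hA.diag_pos
  refine .of_isSymm (IsSymm.ext fun i j => ?_) fun w hw => ?_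
  · simp only [Matrix.chio, of_apply, hA.isSymm.apply]
    ring
  set v : Fin (m + 1) → ℤ := Fin.cons (-∑ j, A 0 j.succ * w j) (A 0 0 • w)
  have htail : Fin.tail v = A 0 0 • w := Fin.tail_cons _ _
  have hv : v ≠ 0 := fun h => hw <| by
    have := congrArg Fin.tail h
    rw [htail] at this
    exact (smul_eq_zero.1 this).resolve_left ha.ne'
  have hrow : A 0 ⬝ᵥ v = 0 := by
    simp only [dotProduct, Fin.sum_univ_succ, v, Fin.cons_zero, Fin.cons_succ, Pi.smul_apply,
      smul_eq_mul, Finset.mul_sum, ← Finset.sum_neg_distrib, ← Finset.sum_add_distrib]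
    exact Finset.sum_eq_zero fun _ _ => by ring
  have key := mul_dotProduct_mulVec_eq_sq_add_chio hA.isSymm v
  rw [hrow, htail, mulVec_smul, dotProduct_smul, smul_dotProduct, smul_eq_mul, smul_eq_mul] at key
  have hQ : v ⬝ᵥ A *ᵥ v = A 0 0 * (w ⬝ᵥ A.chio *ᵥ w) :=
    mul_left_cancel₀ ha.ne' (by rw [key]; ring)
  exact pos_of_mul_pos_right (hQ ▸ hA.dotProduct_mulVec_pos' hv) ha.le

theorem det_chio (A : Matrix (Fin 3) (Fin 3) ℤ) : A.chio.det = A 0 0 * A.det := by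
  simp [Matrix.chio, det_fin_two, det_fin_three]
  ring

theorem exists_det_eq_one_transpose_zero_eq {v : Fin 3 → ℤ} (hv : IsCoprime (v 1) (v 2)) :
    ∃ U : Matrix (Fin 3) (Fin 3) ℤ, U.det = 1 ∧ Uᵀ 0 = v := by
  obtain ⟨s, t, hst⟩ := hv
  refine ⟨!![v 0, 1, 0; v 1, 0, t; v 2, 0, -s], ?_, ?_⟩
  · simp [det_fin_three]
    linear_combination hst
  · ext i
    fin_cases i <;> rfl

theorem exists_transpose_mul_mul_apply_zero_zero_lt {A : Matrix (Fin 3) (Fin 3) ℤ}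
    (hA : A.PosDef) (hdet : A.det = 1) (ha : 2 ≤ A 0 0) :
    ∃ U : Matrix (Fin 3) (Fin 3) ℤ, U.det = 1 ∧ (Uᵀ * A * U) 0 0 < A 0 0 := by
  obtain ⟨w, hcop, hw⟩ := exists_isCoprime_three_mul_sq_le hA.chio
  rw [det_chio, hdet, mul_one] at hw
  obtain ⟨x, hx⟩ := Int.exists_abs_two_mul_add_mul_le (A 0 1 * w 0 + A 0 2 * w 1)
    (by omega : 0 < A 0 0)
  obtain ⟨U, hU, hcol⟩ := exists_det_eq_one_transpose_zero_eq (v := ![x, w 0, w 1]) hcop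
  refine ⟨U, hU, ?_⟩
  have key := mul_dotProduct_mulVec_eq_sq_add_chio hA.isSymm ![x, w 0, w 1]
  have htail : Fin.tail ![x, w 0, w 1] = w := by ext i; fin_cases i <;> rfl
  have hrow : A 0 ⬝ᵥ ![x, w 0, w 1] = A 0 1 * w 0 + A 0 2 * w 1 + x * A 0 0 := by
    simp [dotProduct, Fin.sum_univ_three]
    ring
  rw [htail, hrow] at key
  rw [transpose_mul_mul_apply, hcol]
  obtain ⟨hc₁, hc₂⟩ := abs_le.1 hx
  set a := A 0 0
  set g := w ⬝ᵥ A.chio *ᵥ w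
  -- `key : a q = c² + g` with `4c² ≤ a²` (from `hx`) and `3g² ≤ 4a` (from `hw`),
  -- so `q ≥ a` would force `27a³ ≤ 64`
  by_contra! hq
  have h₁ : 3 * a ^ 2 ≤ 4 * g := by nlinarith
  have h₂ : 9 * a ^ 4 ≤ 16 * g ^ 2 := by nlinarith
  have h₃ : 8 * a ≤ a ^ 4 := by nlinarith [pow_le_pow_left₀ (by norm_num : (0 : ℤ) ≤ 2) ha 3]
  nlinarith

theorem PosDef.exists_eq_dotProduct_self_of_det_eq_one {A : Matrix (Fin 3) (Fin 3) ℤ}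
    (hA : A.PosDef) (hdet : A.det = 1) (v : Fin 3 → ℤ) :
    ∃ w : Fin 3 → ℤ, v ⬝ᵥ A *ᵥ v = w ⬝ᵥ w := by
  induction hN : (A 0 0).toNat using Nat.strong_induction_on generalizing A v with
  | _ N ih =>
  rcases (by have := hA.diag_pos (i := 0); omega : A 0 0 = 1 ∨ 2 ≤ A 0 0) with ha | ha
  · obtain ⟨U, hU, hUG⟩ :=
      exists_transpose_mul_mul_eq_one hA.chio (by rw [det_chio, ha, hdet, one_mul])
    obtain ⟨u, hu⟩ := exists_eq_dotProduct_self_of_transpose_mul_mul_eq_one hU hUG (Fin.tail v)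
    refine ⟨vecCons (A 0 ⬝ᵥ v) u, ?_⟩
    have key := mul_dotProduct_mulVec_eq_sq_add_chio hA.isSymm v
    rw [ha, one_mul, hu] at key
    rw [key, cons_dotProduct_cons]
    ring
  · obtain ⟨U, hU, hlt⟩ := exists_transpose_mul_mul_apply_zero_zero_lt hA hdet ha
    obtain ⟨w, hw⟩ := exists_dotProduct_mulVec_transpose_mul_mul_eq A hU v
    obtain ⟨u, hu⟩ := ih _ (by omega) (hA.transpose_mul_mul_of_det_eq_one hU)
      (by rw [det_transpose_mul_mul_of_det_eq_one A hU, hdet]) w rfl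
    exact ⟨u, hw ▸ hu⟩

end Matrix

theorem exists_posDef_det_eq_one_apply_zero_zero_eq {n p W : ℤ} (hn : 0 < n) (hp : 0 < p)
    (hnp : n ∣ p + 1) (hpW : p ∣ W ^ 2 + n) :
    ∃ A : Matrix (Fin 3) (Fin 3) ℤ, A.PosDef ∧ A.det = 1 ∧ A 0 0 = n := by
  obtain ⟨s, hs⟩ := hnp
  obtain ⟨r, hr⟩ := hpW
  set A : Matrix (Fin 3) (Fin 3) ℤ := !![n, 1, W; 1, s, 0; W, 0, s * r - 1]
  have hQ (v : Fin 3 → ℤ) : p * n * (v ⬝ᵥ A *ᵥ v) =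
      p * (n * v 0 + v 1 + W * v 2) ^ 2 + (p * v 1 - W * v 2) ^ 2 + n * v 2 ^ 2 := by
    simp [A, dotProduct, mulVec, Fin.sum_univ_three]
    linear_combination (-p * v 1 ^ 2 - p * r * v 2 ^ 2) * hs - (p + 1) * v 2 ^ 2 * hr
  refine ⟨A, .of_isSymm (IsSymm.ext fun i j => by fin_cases i <;> fin_cases j <;> rfl)
    fun v hv => ?_, by simp [A, det_fin_three]; linear_combination (-s * r) * hs - s * hr, rfl⟩
  by_contra! hle
  have hsum : p * (n * v 0 + v 1 + W * v 2) ^ 2 + (p * v 1 - W * v 2) ^ 2 + n * v 2 ^ 2 ≤ 0 := by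
    rw [← hQ]
    exact mul_nonpos_of_nonneg_of_nonpos (by positivity) hle
  have e₁ : 0 ≤ p * (n * v 0 + v 1 + W * v 2) ^ 2 := by positivity
  have e₂ : 0 ≤ (p * v 1 - W * v 2) ^ 2 := by positivity
  have e₃ : 0 ≤ n * v 2 ^ 2 := by positivity
  have h₂ : v 2 = 0 := by simpa [hn.ne'] using (show n * v 2 ^ 2 = 0 by linarith)
  have h₁ : v 1 = 0 := by
    simpa [h₂, hp.ne'] using (show (p * v 1 - W * v 2) ^ 2 = 0 by linarith)
  have h₀ : v 0 = 0 := by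
    simpa [h₁, h₂, hn.ne', hp.ne'] using (show p * (n * v 0 + v 1 + W * v 2) ^ 2 = 0 by linarith)
  exact hv (funext fun i => by fin_cases i <;> assumption)

theorem Nat.exists_prime_mod_four_mul_eq (n : ℕ) (hn : 0 < n) :
    ∃ p : ℕ, p.Prime ∧ p % (4 * n) = 2 * n - 1 := by
  have hsq : (2 * n - 1) * (2 * n - 1) ≡ 1 [MOD 4 * n] := by
    obtain ⟨m, rfl⟩ := Nat.exists_eq_add_of_lt hn
    rw [Nat.ModEq, show (2 * (0 + m + 1) - 1) * (2 * (0 + m + 1) - 1) = 1 + 4 * (0 + m + 1) * m by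
      rw [show 2 * (0 + m + 1) - 1 = 2 * m + 1 by omega]; ring, Nat.add_mul_mod_self_left]
  have : NeZero (4 * n) := ⟨by omega⟩
  obtain ⟨p, -, hp, hpmod⟩ := Nat.forall_exists_prime_gt_and_eq_mod
    ((ZMod.isUnit_iff_coprime _ _).2 (Nat.coprime_of_mul_modEq_one _ hsq)) 0
  refine ⟨p, hp, ?_⟩
  rw [ZMod.natCast_eq_natCast_iff' p _ (4 * n)] at hpmod
  rw [hpmod, Nat.mod_eq_of_lt (by omega)]

theorem jacobiSym_neg_eq_one_of_mod_four_mul_eq {n p : ℕ} (hn : n % 4 = 1 ∨ n % 4 = 2)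
    (hp : p % (4 * n) = 2 * n - 1) : jacobiSym (-n) p = 1 := by
  have hodd : Odd (2 * n - 1) := by rw [Nat.odd_iff]; omega
  have hpodd : Odd p := by
    rw [Nat.odd_iff, ← Nat.mod_mod_of_dvd p (dvd_mul_of_dvd_left (by norm_num : 2 ∣ 4) n), hp]
    omega
  have hmod : (4 * -(n : ℤ)) % ((2 * n - 1 : ℕ) : ℤ) = -2 % ((2 * n - 1 : ℕ) : ℤ) := by
    refine Int.emod_eq_emod_iff_emod_sub_eq_zero.2 (Int.emod_eq_zero_of_dvd ⟨-2, ?_⟩)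
    push_cast [Nat.one_le_iff_ne_zero.2 (by omega : 2 * n ≠ 0)]
    ring
  have hneg : jacobiSym (-n) (2 * n - 1) = jacobiSym (-2) (2 * n - 1) := by
    rw [← one_mul (jacobiSym (-n) _), ← jacobiSym.at_four hodd, ← jacobiSym.mul_left]
    exact jacobiSym.mod_left' hmod
  rw [jacobiSym.mod_right _ hpodd, Int.natAbs_neg, Int.natAbs_natCast, hp, hneg,
    jacobiSym.at_neg_two hodd, ZMod.χ₈'_nat_eq_if_mod_eight]
  have h₂ : (2 * n - 1) % 2 = 1 := by omega
  have h₈ : (2 * n - 1) % 8 = 1 ∨ (2 * n - 1) % 8 = 3 := by omega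
  simp [h₂, h₈]

theorem ZMod.exists_dvd_sq_add_of_isSquare_neg {p : ℕ} {a : ℤ}
    (h : IsSquare ((-a : ℤ) : ZMod p)) : ∃ W : ℤ, (p : ℤ) ∣ W ^ 2 + a := by
  obtain ⟨w, hw⟩ := h
  obtain ⟨W, rfl⟩ := ZMod.intCast_surjective w
  refine ⟨W, (ZMod.intCast_zmod_eq_zero_iff_dvd _ p).1 ?_⟩
  push_cast at hw ⊢
  rw [sq, ← hw]
  ring

theorem Nat.exists_sum_three_sq_of_mod_four {n : ℕ} (hn : n % 4 = 1 ∨ n % 4 = 2) :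
    ∃ x y z : ℤ, (n : ℤ) = x ^ 2 + y ^ 2 + z ^ 2 := by
  obtain ⟨p, hp, hpn⟩ := Nat.exists_prime_mod_four_mul_eq n (by omega)
  have := Fact.mk hp
  obtain ⟨W, hW⟩ := ZMod.exists_dvd_sq_add_of_isSquare_neg
    (ZMod.isSquare_of_jacobiSym_eq_one (jacobiSym_neg_eq_one_of_mod_four_mul_eq hn hpn))
  have hdvd : n ∣ p + 1 := by
    have h := Nat.div_add_mod p (4 * n)
    rw [hpn] at h
    exact ⟨4 * (p / (4 * n)) + 2, by
      nth_rewrite 1 [← h]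
      rw [add_assoc, Nat.sub_add_cancel (by omega)]
      ring⟩
  obtain ⟨A, hA, hdet, hA00⟩ := exists_posDef_det_eq_one_apply_zero_zero_eq (by omega)
    (by exact_mod_cast hp.pos) (by exact_mod_cast hdvd) hW
  obtain ⟨w, hw⟩ := hA.exists_eq_dotProduct_self_of_det_eq_one hdet (Pi.single 0 1)
  exact ⟨w 0, w 1, w 2, by simpa [hA00, dotProduct, Fin.sum_univ_three, sq] using hw⟩

theorem exists_sum_three_sq_add_six_mul_sq (m : ℕ) :
    ∃ a b c u : ℤ, (m : ℤ) = a ^ 2 + b ^ 2 + c ^ 2 + 6 * u ^ 2 := by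
  by_cases hm : m % 4 = 1 ∨ m % 4 = 2
  · obtain ⟨a, b, c, h⟩ := Nat.exists_sum_three_sq_of_mod_four hm
    exact ⟨a, b, c, 0, by rw [h]; ring⟩
  by_cases h6 : 6 ≤ m
  · obtain ⟨a, b, c, h⟩ := Nat.exists_sum_three_sq_of_mod_four (n := m - 6) (by omega)
    exact ⟨a, b, c, 1, by push_cast [h6] at h; linarith⟩
  rcases (by omega : m = 0 ∨ m = 3 ∨ m = 4) with rfl | rfl | rfl
  exacts [⟨0, 0, 0, 0, by norm_num⟩, ⟨1, 1, 1, 0, by norm_num⟩, ⟨2, 0, 0, 0, by norm_num⟩]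

theorem represent_with_unit_coordinate (k : ℤ) (hk : 2 ≤ k) :
    ∃ x₁ x₂ x₃ x₄ x₅ : ℤ,
      k = 2 * x₁ ^ 2 + 2 * x₂ ^ 2 + 2 * x₃ ^ 2 + 2 * x₄ ^ 2 + 3 * x₅ ^ 2 ∧
      (x₁ = 1 ∨ x₅ = 1) := by
  obtain ⟨j, hj | hj⟩ : ∃ j : ℕ, k = 2 * j + 2 ∨ k = 2 * j + 3 := ⟨((k - 2) / 2).toNat, by omega⟩
  · obtain ⟨a, b, c, u, h⟩ := exists_sum_three_sq_add_six_mul_sq j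
    exact ⟨1, a, b, c, 2 * u, by rw [hj, h]; ring, Or.inl rfl⟩
  · obtain ⟨a, b, c, d, h⟩ := Nat.sum_four_squares j
    exact ⟨a, b, c, d, 1, by rw [hj, ← h]; push_cast; ring, Or.inr rfl⟩
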